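/- The assignment c(L_n, Y_m) = ((m+μ+1)/2)·δ_{n, −m−μ} (all other basis pairings zero, extended skew-symmetrically and bilinearly) defines a 2-cocycle on L_{−3,μ} for μ ∈ ℤ*. -/

import Mathlib

/-- The free ℂ-module with basis {L_n, Y_n, M_n : n ∈ ℤ};
(n, 0) ↔ L_n, (n, 1) ↔ Y_n, (n, 2) ↔ M_n. -/
abbrev SVModule : Type := (ℤ × Fin 3) →₀ ℂ

/-- basis vector -/
noncomputable def sv (i : ℤ × Fin 3) : SVModule := Finsupp.single i 1

/-- The bracket of L_{λ,μ} on basis vectors. -/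
noncomputable def svBracketAux (lam mu : ℂ) (i j : ℤ × Fin 3) : SVModule :=
  let n : ℤ := i.1
  let m : ℤ := j.1
  if i.2 = 0 ∧ j.2 = 0 then ((m : ℂ) - n) • sv (m + n, 0)
  else if i.2 = 0 ∧ j.2 = 1 then ((m : ℂ) - (lam + 1) * n / 2 + mu) • sv (m + n, 1)
  else if i.2 = 1 ∧ j.2 = 0 then -(((n : ℂ) - (lam + 1) * m / 2 + mu) • sv (m + n, 1))
  else if i.2 = 1 ∧ j.2 = 1 then ((m : ℂ) - n) • sv (m + n, 2)
  else if i.2 = 0 ∧ j.2 = 2 then ((m : ℂ) - lam * n + 2 * mu) • sv (m + n, 2)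
  else if i.2 = 2 ∧ j.2 = 0 then -(((n : ℂ) - lam * m + 2 * mu) • sv (m + n, 2))
  else 0

/-- The bilinear extension of the bracket. -/
noncomputable def svBracket (lam mu : ℂ) :
    SVModule →ₗ[ℂ] SVModule →ₗ[ℂ] SVModule :=
  Finsupp.lsum ℂ fun i => LinearMap.toSpanSingleton ℂ _
    (Finsupp.lsum ℂ fun j => LinearMap.toSpanSingleton ℂ _ (svBracketAux lam mu i j))

/-- Cocycle values: c(L_n, Y_m) = ((m+μ+1)/2)·δ_{n, -m-μ}, extended
skew-symmetrically, all other basis pairings zero. -/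
noncomputable def cVal (mu : ℤ) (i j : ℤ × Fin 3) : ℂ :=
  if i.2 = 0 ∧ j.2 = 1 ∧ i.1 = -j.1 - mu then ((j.1 : ℂ) + mu + 1) / 2
  else if i.2 = 1 ∧ j.2 = 0 ∧ j.1 = -i.1 - mu then -(((i.1 : ℂ) + mu + 1) / 2)
  else 0

/-- The bilinear extension of the cocycle values. -/
noncomputable def cMap (mu : ℤ) : SVModule →ₗ[ℂ] SVModule →ₗ[ℂ] ℂ :=
  Finsupp.lsum ℂ fun i => LinearMap.toSpanSingleton ℂ _
    (Finsupp.lsum ℂ fun j => LinearMap.toSpanSingleton ℂ _ (cVal mu i j))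

/-! Both conditions are multilinear, so it suffices to check them on basis vectors. As `c` pairs
only `L` with `Y`, and `[Y, Y]` lies in the span of the `M`s, the only basis triples contributing
to the cocycle identity are the cyclic arrangements of `(L_n, L_m, Y_p)` with `n + m + p = -μ`.
For `λ = -3` we have `[L_m, Y_p] = (m + p + μ) Y_{m+p}`, and the identity becomes
`(m - n)(1 - m - n) + n(1 - n) - m(1 - m) = 0`. -/

section CocycleDefect

variable {R M N : Type*} [CommSemiring R] [AddCommMonoid M] [Module R M]
  [AddCommMonoid N] [Module R N]

/-- `T.rotate x y z = T y z x`. -/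
def LinearMap.rotate (T : M →ₗ[R] M →ₗ[R] M →ₗ[R] N) : M →ₗ[R] M →ₗ[R] M →ₗ[R] N :=
  (LinearMap.lflip.comp T).flip

def cocycleDefect (B : M →ₗ[R] M →ₗ[R] M) (ψ : M →ₗ[R] M →ₗ[R] N) :
    M →ₗ[R] M →ₗ[R] M →ₗ[R] N :=
  B.compr₂ ψ + (B.compr₂ ψ).rotate + (B.compr₂ ψ).rotate.rotate

theorem cocycleDefect_apply (B : M →ₗ[R] M →ₗ[R] M) (ψ : M →ₗ[R] M →ₗ[R] N) (x y z : M) :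
    cocycleDefect B ψ x y z = ψ (B x y) z + ψ (B y z) x + ψ (B z x) y := rfl

end CocycleDefect

theorem Finsupp.trilinear_ext {ι R N : Type*} [CommSemiring R] [AddCommMonoid N] [Module R N]
    {T T' : (ι →₀ R) →ₗ[R] (ι →₀ R) →ₗ[R] (ι →₀ R) →ₗ[R] N}
    (h : ∀ i j k, T (single i 1) (single j 1) (single k 1) =
      T' (single i 1) (single j 1) (single k 1)) : T = T' :=
  Finsupp.basisSingleOne.ext fun i =>
    LinearMap.ext_basis Finsupp.basisSingleOne Finsupp.basisSingleOne (h i)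

theorem cMap_sv (mu : ℤ) (i j : ℤ × Fin 3) : cMap mu (sv i) (sv j) = cVal mu i j := by
  simp [cMap, sv]

theorem svBracket_sv (lam mu : ℂ) (i j : ℤ × Fin 3) :
    svBracket lam mu (sv i) (sv j) = svBracketAux lam mu i j := by
  simp [svBracket, sv]

theorem cVal_swap (mu : ℤ) (i j : ℤ × Fin 3) : cVal mu i j = -cVal mu j i := by
  obtain ⟨n, a⟩ := i
  obtain ⟨m, b⟩ := j
  fin_cases a <;> fin_cases b <;> simp [cVal] <;> split_ifs <;> ring

theorem cocycleDefect_sv (mu : ℤ) (i j k : ℤ × Fin 3) :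
    cocycleDefect (svBracket (-3) (mu : ℂ)) (cMap mu) (sv i) (sv j) (sv k) = 0 := by
  obtain ⟨n, a⟩ := i
  obtain ⟨m, b⟩ := j
  obtain ⟨p, c⟩ := k
  fin_cases a <;> fin_cases b <;> fin_cases c <;>
    simp [cocycleDefect_apply, svBracket_sv, svBracketAux, cMap_sv, cVal] <;>
    split_ifs <;> first
      | (exfalso; omega)
      | (have hp : p = -n - m - mu := by omega
         subst hp; push_cast; ring)
      | simp

theorem stmt_18_general (mu : ℤ) :
    (∀ x y : SVModule, cMap mu x y = - cMap mu y x) ∧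
    (∀ x y z : SVModule,
      cMap mu (svBracket (-3) (mu : ℂ) x y) z
        + cMap mu (svBracket (-3) (mu : ℂ) y z) x
        + cMap mu (svBracket (-3) (mu : ℂ) z x) y = 0) := by
  have skew : cMap mu = -(cMap mu).flip :=
    LinearMap.ext_basis Finsupp.basisSingleOne Finsupp.basisSingleOne fun i j => by
      change cMap mu (sv i) (sv j) = -cMap mu (sv j) (sv i)
      rw [cMap_sv, cMap_sv, cVal_swap]
  have cocycle : cocycleDefect (svBracket (-3) (mu : ℂ)) (cMap mu) = 0 :=
    Finsupp.trilinear_ext (cocycleDefect_sv mu)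
  exact ⟨fun x y => congr($skew x y), fun x y z => congr($cocycle x y z)⟩

theorem stmt_18 (mu : ℤ) (hmu : mu ≠ 0) :
    (∀ x y : SVModule, cMap mu x y = - cMap mu y x) ∧
    (∀ x y z : SVModule,
      cMap mu (svBracket (-3) (mu : ℂ) x y) z
        + cMap mu (svBracket (-3) (mu : ℂ) y z) x
        + cMap mu (svBracket (-3) (mu : ℂ) z x) y = 0) :=
  stmt_18_general mu
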